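/- The relation ⊢_GBD satisfies (B↛D): for every information set Γ ⊆ L, every Ω ⊆ L_B, and every φ ∈ L_B, Γ ⊢_GBD φ̄ iff Γ_D ∪ Ω ⊢_GBD φ̄; and (D↛B): for every information set Γ ⊆ L, every Δ ⊆ L_D, and every φ ∈ L_B, Γ ⊢_GBD φ iff Γ_B ∪ Δ ⊢_GBD φ. -/

import Mathlib

/-- Propositional formulas over a set of atoms `A`, with the usual connectives,
`⊥` and `⊤`. -/
inductive PLForm (A : Type) : Type
  | atom   : A → PLForm A
  | falsum : PLForm A
  | verum  : PLForm A
  | neg    : PLForm A → PLForm A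
  | conj   : PLForm A → PLForm A → PLForm A
  | disj   : PLForm A → PLForm A → PLForm A
  | impl   : PLForm A → PLForm A → PLForm A

/-- Evaluation of a propositional formula under a classical valuation. -/
def PLForm.eval {A : Type} (v : A → Bool) : PLForm A → Bool
  | .atom a   => v a
  | .falsum   => false
  | .verum    => true
  | .neg φ    => !(PLForm.eval v φ)
  | .conj φ ψ => PLForm.eval v φ && PLForm.eval v ψ
  | .disj φ ψ => PLForm.eval v φ || PLForm.eval v ψ
  | .impl φ ψ => !(PLForm.eval v φ) || PLForm.eval v ψ

/-- Classical propositional consequence `X ⊢_PL φ`: every valuation satisfying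
all members of `X` satisfies `φ`. -/
def PLCons {A : Type} (X : Set (PLForm A)) (φ : PLForm A) : Prop :=
  ∀ v : A → Bool, (∀ ψ ∈ X, PLForm.eval v ψ = true) → PLForm.eval v φ = true

/-- The language `L = L_B ∪ L_D`: a potential belief `φ` or a potential
disbelief `φ̄` for each propositional formula `φ`. -/
inductive LSent (A : Type) : Type
  | bel : PLForm A → LSent A
  | dis : PLForm A → LSent A

/-- The set of potential beliefs `L_B`. -/
def LB (A : Type) : Set (LSent A) := Set.range LSent.bel

/-- The set of potential disbeliefs `L_D`. -/
def LD (A : Type) : Set (LSent A) := Set.range LSent.dis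

/-- The propositional formulas believed in `Γ` (so that `Γ_B` corresponds to
`LSent.bel '' bels Γ = Γ ∩ LB A`). -/
def bels {A : Type} (Γ : Set (LSent A)) : Set (PLForm A) := {φ | LSent.bel φ ∈ Γ}

/-- The propositional formulas disbelieved in `Γ`. -/
def diss {A : Type} (Γ : Set (LSent A)) : Set (PLForm A) := {φ | LSent.dis φ ∈ Γ}

/-- The logic WBD: smallest relation closed under (B), (D⊥) and (WD). -/
inductive WBD {A : Type} : Set (LSent A) → LSent A → Prop
  | B {Γ : Set (LSent A)} {φ : PLForm A} :
      PLCons (bels Γ) φ → WBD Γ (.bel φ)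
  | Dbot {Γ : Set (LSent A)} {φ : PLForm A} :
      PLCons {φ} .falsum → WBD Γ (.dis φ)
  | WD {Γ : Set (LSent A)} {φ ψ : PLForm A} :
      LSent.dis ψ ∈ Γ → PLCons {φ} ψ → WBD Γ (.dis φ)

/-- The logic GBD: smallest relation closed under (B), (D⊥) and (GD). -/
inductive GBD {A : Type} : Set (LSent A) → LSent A → Prop
  | B {Γ : Set (LSent A)} {φ : PLForm A} :
      PLCons (bels Γ) φ → GBD Γ (.bel φ)
  | Dbot {Γ : Set (LSent A)} {φ : PLForm A} :
      PLCons {φ} .falsum → GBD Γ (.dis φ)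
  | GD {Γ : Set (LSent A)} {φ : PLForm A} :
      PLCons (PLForm.neg '' diss Γ) (.neg φ) → GBD Γ (.dis φ)

/-- The logic BD: smallest relation closed under (B), (D⊥) and (D). -/
inductive BD {A : Type} : Set (LSent A) → LSent A → Prop
  | B {Γ : Set (LSent A)} {φ : PLForm A} :
      PLCons (bels Γ) φ → BD Γ (.bel φ)
  | Dbot {Γ : Set (LSent A)} {φ : PLForm A} :
      PLCons {φ} .falsum → BD Γ (.dis φ)
  | D {Γ : Set (LSent A)} {φ ψ : PLForm A} :
      LSent.dis ψ ∈ Γ → PLCons (insert φ (bels Γ)) ψ → BD Γ (.dis φ)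

/-- The logic BN: smallest relation closed under (B), (D⊥), (WD) and (D→B). -/
inductive BN {A : Type} : Set (LSent A) → LSent A → Prop
  | B {Γ : Set (LSent A)} {φ : PLForm A} :
      PLCons (bels Γ) φ → BN Γ (.bel φ)
  | Dbot {Γ : Set (LSent A)} {φ : PLForm A} :
      PLCons {φ} .falsum → BN Γ (.dis φ)
  | WD {Γ : Set (LSent A)} {φ ψ : PLForm A} :
      LSent.dis ψ ∈ Γ → PLCons {φ} ψ → BN Γ (.dis φ)
  | DtoB {Γ : Set (LSent A)} {φ : PLForm A} :
      BN Γ (.dis φ) → BN Γ (.bel (.neg φ))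

/-- Satisfaction in a WBD-model `(M, 𝒩)` (also used for BD-models):
a belief `φ` holds iff `M ⊆ M(φ)`; a disbelief `φ̄` holds iff some
`N ∈ 𝒩` satisfies `N ⊆ M(¬φ)`. -/
def satWBD {A : Type} (M : Set (A → Bool)) (𝒩 : Set (Set (A → Bool))) :
    LSent A → Prop
  | .bel φ => ∀ v ∈ M, PLForm.eval v φ = true
  | .dis φ => ∃ N ∈ 𝒩, ∀ v ∈ N, PLForm.eval v φ = false

/-- WBD-entailment: truth in all WBD-models (with `𝒩` nonempty) of `Γ`. -/
def WBDent {A : Type} (Γ : Set (LSent A)) (α : LSent A) : Prop :=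
  ∀ (M : Set (A → Bool)) (𝒩 : Set (Set (A → Bool))), 𝒩.Nonempty →
    (∀ β ∈ Γ, satWBD M 𝒩 β) → satWBD M 𝒩 α

/-- Satisfaction in a GBD-model `(M, N)`. -/
def satGBD {A : Type} (M N : Set (A → Bool)) : LSent A → Prop
  | .bel φ => ∀ v ∈ M, PLForm.eval v φ = true
  | .dis φ => ∀ v ∈ N, PLForm.eval v φ = false

/-- GBD-entailment: truth in all GBD-models of `Γ`. -/
def GBDent {A : Type} (Γ : Set (LSent A)) (α : LSent A) : Prop :=
  ∀ (M N : Set (A → Bool)), (∀ β ∈ Γ, satGBD M N β) → satGBD M N α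

/-- BD-entailment: truth in all BD-models of `Γ`, i.e. WBD-models where
every `N ∈ 𝒩` is a subset of `M`. -/
def BDent {A : Type} (Γ : Set (LSent A)) (α : LSent A) : Prop :=
  ∀ (M : Set (A → Bool)) (𝒩 : Set (Set (A → Bool))), 𝒩.Nonempty →
    (∀ N ∈ 𝒩, N ⊆ M) → (∀ β ∈ Γ, satWBD M 𝒩 β) → satWBD M 𝒩 α

/-- `Γ` is B-inconsistent iff `Γ_B ⊢_BD ⊥`. -/
def BIncons {A : Type} (Γ : Set (LSent A)) : Prop :=
  BD (Γ ∩ LB A) (.bel .falsum)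

/-- `Γ` is D-inconsistent iff `Γ_D ⊢_BD ⊤̄`. -/
def DIncons {A : Type} (Γ : Set (LSent A)) : Prop :=
  BD (Γ ∩ LD A) (.dis .verum)

/-- `Γ` is BD-inconsistent iff `Γ ⊢_BD φ` and `Γ ⊢_BD φ̄` for some `φ ∈ L_B`. -/
def BDIncons {A : Type} (Γ : Set (LSent A)) : Prop :=
  ∃ φ : PLForm A, BD Γ (.bel φ) ∧ BD Γ (.dis φ)

/-! Each rule of GBD that concludes a disbelief reads only the disbeliefs of `Γ`, and the only
rule that concludes a belief reads only its beliefs; so adding or dropping sentences of the other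
kind changes nothing. -/

section Projections

variable {A : Type} {Γ Ω : Set (LSent A)}

theorem diss_inter_LD : diss (Γ ∩ LD A) = diss Γ := by
  ext φ
  exact and_iff_left ⟨φ, rfl⟩

theorem bels_inter_LB : bels (Γ ∩ LB A) = bels Γ := by
  ext φ
  exact and_iff_left ⟨φ, rfl⟩

theorem diss_union_of_subset_LB (hΩ : Ω ⊆ LB A) : diss (Γ ∪ Ω) = diss Γ := by
  ext φ
  refine or_iff_left fun h => ?_
  obtain ⟨ψ, hψ⟩ := hΩ h
  cases hψ

theorem bels_union_of_subset_LD (hΩ : Ω ⊆ LD A) : bels (Γ ∪ Ω) = bels Γ := by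
  ext φ
  refine or_iff_left fun h => ?_
  obtain ⟨ψ, hψ⟩ := hΩ h
  cases hψ

end Projections

namespace GBD

variable {A : Type} {Γ : Set (LSent A)} {φ : PLForm A}

theorem bel_iff : GBD Γ (.bel φ) ↔ PLCons (bels Γ) φ :=
  ⟨by rintro ⟨h⟩; exact h, B⟩

theorem dis_iff :
    GBD Γ (.dis φ) ↔ PLCons {φ} .falsum ∨ PLCons (PLForm.neg '' diss Γ) (.neg φ) := by
  refine ⟨fun h => ?_, fun h => h.elim Dbot GD⟩
  cases h with
  | Dbot h => exact .inl h
  | GD h => exact .inr h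

end GBD

/-- `⊢_GBD` satisfies (B↛D) and (D↛B). -/
theorem gbd_decoupled (A : Type) :
    (∀ (Γ Ω : Set (LSent A)), Ω ⊆ LB A → ∀ φ : PLForm A,
      (GBD Γ (.dis φ) ↔ GBD ((Γ ∩ LD A) ∪ Ω) (.dis φ))) ∧
    (∀ (Γ Δ : Set (LSent A)), Δ ⊆ LD A → ∀ φ : PLForm A,
      (GBD Γ (.bel φ) ↔ GBD ((Γ ∩ LB A) ∪ Δ) (.bel φ))) := by
  refine ⟨fun Γ Ω hΩ φ => ?_, fun Γ Δ hΔ φ => ?_⟩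
  · rw [GBD.dis_iff, GBD.dis_iff, diss_union_of_subset_LB hΩ, diss_inter_LD]
  · rw [GBD.bel_iff, GBD.bel_iff, bels_union_of_subset_LD hΔ, bels_inter_LB]
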